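/- Let X be a nonempty finite type and let L = Fin C with C ≥ 1. Let p : Fin C → ℝ be a probability vector with p_s > 0 for all s, and for each s let z_s : X → ℝ be a probability mass function on X. Consider the joint distribution P(s, x) = p_s z_s(x) on Fin C × X, with marginal m(x) = Σ_s p_s z_s(x). Then the mutual information MI = Σ_{s,x} p_s z_s(x) ln( z_s(x) / m(x) ) (with the convention 0·ln 0 = 0) satisfies MI ≥ −Σ_{s=1}^{C} p_s ln( Σ_{r=1}^{C} p_r BC(z_s, z_r) ), where BC(z_s, z_r) = Σ_{x ∈ X} √(z_s(x) z_r(x)) is the Bhattacharyya coefficient. -/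

import Mathlib

/-!
Write `q = ∑ r, p_r √z_r` and `T_s = ∑ r, p_r BC(z_s, z_r) = ∑ x, √z_s q`. Then
`u_s = √z_s q / T_s` is a probability vector on `X`, and for each `x` the weights
`v_x(s) = p_s √z_s(x) m(x) / q(x)` have total mass at most `m(x) = ∑ s, p_s z_s(x)`
(equality unless `q(x) = 0`, where division by zero makes them vanish).
Since `z_s T_s / m = (z_s / u_s) · (p_s z_s / v_x(s))`, the quantity `MI + ∑ s, p_s log T_s`
is the sum of `∑ s, p_s KL(z_s ‖ u_s)` and of the terms
`∑ s, p_s z_s(x) log (p_s z_s(x) / v_x(s))`, all nonnegative by Gibbs' inequality.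
-/

open Real Finset

theorem sub_le_mul_log_div {a b : ℝ} (ha : 0 ≤ a) (hb : 0 ≤ b) (hab : 0 < a → 0 < b) :
    a - b ≤ a * log (a / b) := by
  rcases ha.eq_or_lt with rfl | ha
  · simpa using hb
  have hb := hab ha
  calc a - b = a * (1 - (a / b)⁻¹) := by field_simp
    _ ≤ a * log (a / b) := by gcongr; exact one_sub_inv_le_log_of_pos (div_pos ha hb)

theorem sum_mul_log_div_nonneg {ι : Type*} [Fintype ι] {a b : ι → ℝ} (ha : ∀ i, 0 ≤ a i)
    (hb : ∀ i, 0 ≤ b i) (hab : ∀ i, 0 < a i → 0 < b i) (hsum : ∑ i, b i ≤ ∑ i, a i) :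
    0 ≤ ∑ i, a i * log (a i / b i) :=
  calc 0 ≤ ∑ i, a i - ∑ i, b i := sub_nonneg.2 hsum
    _ = ∑ i, (a i - b i) := (sum_sub_distrib ..).symm
    _ ≤ _ := sum_le_sum fun i _ => sub_le_mul_log_div (ha i) (hb i) (hab i)

section Mixture

variable {ι X : Type*} [Fintype ι]

noncomputable def mixture (p : ι → ℝ) (z : ι → X → ℝ) (x : X) : ℝ := ∑ s, p s * z s x

noncomputable def sqrtMixture (p : ι → ℝ) (z : ι → X → ℝ) (x : X) : ℝ := ∑ s, p s * √(z s x)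

noncomputable def avgBhattacharyya [Fintype X] (p : ι → ℝ) (z : ι → X → ℝ) (s : ι) : ℝ :=
  ∑ r, p r * ∑ x, √(z s x * z r x)

noncomputable def sqrtTilt [Fintype X] (p : ι → ℝ) (z : ι → X → ℝ) (s : ι) (x : X) : ℝ :=
  √(z s x) * sqrtMixture p z x / avgBhattacharyya p z s

noncomputable def fiberTilt (p : ι → ℝ) (z : ι → X → ℝ) (x : X) (s : ι) : ℝ :=
  p s * √(z s x) * mixture p z x / sqrtMixture p z x

variable {p : ι → ℝ} {z : ι → X → ℝ}

theorem mixture_nonneg (hp : ∀ s, 0 < p s) (hz : ∀ s x, 0 ≤ z s x) (x : X) :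
    0 ≤ mixture p z x :=
  sum_nonneg fun s _ => mul_nonneg (hp s).le (hz s x)

theorem mixture_pos (hp : ∀ s, 0 < p s) (hz : ∀ s x, 0 ≤ z s x) {s : ι} {x : X}
    (hzsx : 0 < z s x) : 0 < mixture p z x :=
  sum_pos' (fun r _ => mul_nonneg (hp r).le (hz r x)) ⟨s, mem_univ s, mul_pos (hp s) hzsx⟩

theorem sqrtMixture_nonneg (hp : ∀ s, 0 < p s) (x : X) : 0 ≤ sqrtMixture p z x :=
  sum_nonneg fun s _ => mul_nonneg (hp s).le (sqrt_nonneg _)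

theorem sqrtMixture_pos (hp : ∀ s, 0 < p s) {s : ι} {x : X} (hzsx : 0 < z s x) :
    0 < sqrtMixture p z x :=
  sum_pos' (fun r _ => mul_nonneg (hp r).le (sqrt_nonneg _))
    ⟨s, mem_univ s, mul_pos (hp s) (sqrt_pos.2 hzsx)⟩

theorem avgBhattacharyya_eq_sum_sqrt_mul_sqrtMixture [Fintype X] {s : ι} (hzs : ∀ x, 0 ≤ z s x) :
    avgBhattacharyya p z s = ∑ x, √(z s x) * sqrtMixture p z x := by
  simp only [avgBhattacharyya, sqrtMixture, mul_sum, sqrt_mul (hzs _)]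
  rw [sum_comm]
  exact sum_congr rfl fun x _ => sum_congr rfl fun r _ => by ring

theorem avgBhattacharyya_pos [Fintype X] (hp : ∀ s, 0 < p s) (hz : ∀ s x, 0 ≤ z s x) {s : ι}
    (hzs : ∑ x, z s x = 1) : 0 < avgBhattacharyya p z s := by
  have hdiag : ∑ x, √(z s x * z s x) = 1 := by simp only [sqrt_mul_self (hz s _), hzs]
  refine (hp s).trans_le ?_
  calc p s = p s * ∑ x, √(z s x * z s x) := by rw [hdiag, mul_one]
    _ ≤ avgBhattacharyya p z s :=
      single_le_sum (f := fun r => p r * ∑ x, √(z s x * z r x))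
        (fun r _ => mul_nonneg (hp r).le (sum_nonneg fun x _ => sqrt_nonneg _)) (mem_univ s)

theorem sum_sqrtTilt [Fintype X] (hp : ∀ s, 0 < p s) (hz : ∀ s x, 0 ≤ z s x) {s : ι}
    (hzs : ∑ x, z s x = 1) : ∑ x, sqrtTilt p z s x = 1 := by
  simp only [sqrtTilt, ← sum_div]
  rw [← avgBhattacharyya_eq_sum_sqrt_mul_sqrtMixture (hz s),
    div_self (avgBhattacharyya_pos hp hz hzs).ne']

theorem sum_fiberTilt_le (hp : ∀ s, 0 < p s) (hz : ∀ s x, 0 ≤ z s x) (x : X) :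
    ∑ s, fiberTilt p z x s ≤ mixture p z x := by
  simp only [fiberTilt, ← sum_div, ← sum_mul]
  change sqrtMixture p z x * mixture p z x / sqrtMixture p z x ≤ mixture p z x
  rcases (sqrtMixture_nonneg hp x).eq_or_lt with hq | hq
  · rw [← hq, zero_mul, zero_div]
    exact mixture_nonneg hp hz x
  · exact (mul_div_cancel_left₀ _ hq.ne').le

theorem sum_mul_log_div_sqrtTilt_nonneg [Fintype X] (hp : ∀ s, 0 < p s) (hz : ∀ s x, 0 ≤ z s x)
    {s : ι} (hzs : ∑ x, z s x = 1) : 0 ≤ ∑ x, z s x * log (z s x / sqrtTilt p z s x) := by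
  have hT := avgBhattacharyya_pos hp hz hzs
  refine sum_mul_log_div_nonneg (hz s)
    (fun x => div_nonneg (mul_nonneg (sqrt_nonneg _) (sqrtMixture_nonneg hp x)) hT.le)
    (fun x hzsx => div_pos (mul_pos (sqrt_pos.2 hzsx) (sqrtMixture_pos hp hzsx)) hT) ?_
  rw [sum_sqrtTilt hp hz hzs, hzs]

theorem sum_mul_log_div_fiberTilt_nonneg (hp : ∀ s, 0 < p s) (hz : ∀ s x, 0 ≤ z s x) (x : X) :
    0 ≤ ∑ s, p s * z s x * log (p s * z s x / fiberTilt p z x s) := by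
  refine sum_mul_log_div_nonneg (fun s => mul_nonneg (hp s).le (hz s x))
    (fun s => div_nonneg (mul_nonneg (mul_nonneg (hp s).le (sqrt_nonneg _))
      (mixture_nonneg hp hz x)) (sqrtMixture_nonneg hp x))
    (fun s hpz => ?_) (sum_fiberTilt_le hp hz x)
  have hzsx := pos_of_mul_pos_right hpz (hp s).le
  exact div_pos (mul_pos (mul_pos (hp s) (sqrt_pos.2 hzsx)) (mixture_pos hp hz hzsx))
    (sqrtMixture_pos hp hzsx)

theorem mul_log_div_mixture_add_mul_log_avgBhattacharyya [Fintype X] (hp : ∀ s, 0 < p s)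
    (hz : ∀ s x, 0 ≤ z s x) {s : ι} (hzs : ∑ x, z s x = 1) (x : X) :
    p s * z s x * log (z s x / mixture p z x) + p s * z s x * log (avgBhattacharyya p z s) =
      p s * (z s x * log (z s x / sqrtTilt p z s x)) +
        p s * z s x * log (p s * z s x / fiberTilt p z x s) := by
  rcases (hz s x).eq_or_lt with h0 | hzsx
  · simp [← h0]
  have hm := mixture_pos hp hz hzsx
  have hq := sqrtMixture_pos hp hzsx
  have hT := avgBhattacharyya_pos hp hz hzs
  have hsqrt := sqrt_pos.2 hzsx
  have hp' := hp s
  have hu : 0 < sqrtTilt p z s x := by simp only [sqrtTilt]; positivity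
  have hv : 0 < fiberTilt p z x s := by simp only [fiberTilt]; positivity
  have hsplit : z s x / sqrtTilt p z s x * (p s * z s x / fiberTilt p z x s) =
      z s x / mixture p z x * avgBhattacharyya p z s := by
    simp only [sqrtTilt, fiberTilt]
    field_simp
    exact (sq_sqrt (hz s x)).symm
  rw [mul_assoc (p s), mul_assoc (p s), mul_assoc (p s), ← mul_add, ← mul_add,
    ← log_mul (by positivity) hT.ne', ← hsplit, log_mul (by positivity) (by positivity)]
  ring

theorem sum_mul_log_div_mixture_add_sum_mul_log_avgBhattacharyya [Fintype X]
    (hp : ∀ s, 0 < p s) (hz : ∀ s x, 0 ≤ z s x) (hzs : ∀ s, ∑ x, z s x = 1) :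
    ∑ s, ∑ x, p s * z s x * log (z s x / mixture p z x) +
        ∑ s, p s * log (avgBhattacharyya p z s) =
      ∑ s, p s * ∑ x, z s x * log (z s x / sqrtTilt p z s x) +
        ∑ x, ∑ s, p s * z s x * log (p s * z s x / fiberTilt p z x s) := by
  have hlogT : ∀ s, p s * log (avgBhattacharyya p z s) =
      ∑ x, p s * z s x * log (avgBhattacharyya p z s) := fun s => by
    rw [← sum_mul, ← mul_sum, hzs, mul_one]
  simp_rw [hlogT, ← sum_add_distrib,
    mul_log_div_mixture_add_mul_log_avgBhattacharyya hp hz (hzs _), sum_add_distrib, mul_sum]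
  rw [sum_comm (f := fun s x => p s * z s x * log (p s * z s x / fiberTilt p z x s))]

end Mixture

theorem mutual_information_lower_bound_general
    {X : Type*} [Fintype X]
    (C : ℕ)
    (p : Fin C → ℝ) (hp_pos : ∀ s, 0 < p s)
    (z : Fin C → X → ℝ) (hz_nonneg : ∀ s x, 0 ≤ z s x) (hz_sum : ∀ s, ∑ x, z s x = 1)
    -- the mixture marginal
    (m : X → ℝ) (hm : ∀ x, m x = ∑ s, p s * z s x)
    -- the mutual information of the joint distribution `P(s, x) = p s * z s x`
    (MI : ℝ)
    (hMI : MI = ∑ s, ∑ x, p s * z s x * Real.log (z s x / m x)) :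
    MI ≥ -∑ s, p s * Real.log (∑ r, p r * ∑ x, Real.sqrt (z s x * z r x)) := by
  obtain rfl : m = mixture p z := funext hm
  have hcomponent := sum_nonneg (s := univ) fun s _ =>
    mul_nonneg (hp_pos s).le (sum_mul_log_div_sqrtTilt_nonneg hp_pos hz_nonneg (hz_sum s))
  have hfiber := sum_nonneg (s := univ) fun x _ =>
    sum_mul_log_div_fiberTilt_nonneg hp_pos hz_nonneg x
  have hsplit := sum_mul_log_div_mixture_add_sum_mul_log_avgBhattacharyya hp_pos hz_nonneg hz_sum
  change _ ≥ -∑ s, p s * log (avgBhattacharyya p z s)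
  linarith

/-- Mutual-information form of Lemma 1: the mutual information of the joint distribution
`P(s, x) = p s * z s x` is bounded below via pairwise Bhattacharyya coefficients. -/
theorem mutual_information_lower_bound
    {X : Type*} [Fintype X] [Nonempty X]
    (C : ℕ) (hC : 1 ≤ C)
    (p : Fin C → ℝ) (hp_pos : ∀ s, 0 < p s) (hp_sum : ∑ s, p s = 1)
    (z : Fin C → X → ℝ) (hz_nonneg : ∀ s x, 0 ≤ z s x) (hz_sum : ∀ s, ∑ x, z s x = 1)
    -- the mixture marginal
    (m : X → ℝ) (hm : ∀ x, m x = ∑ s, p s * z s x)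
    -- the mutual information of the joint distribution `P(s, x) = p s * z s x`
    (MI : ℝ)
    (hMI : MI = ∑ s, ∑ x, p s * z s x * Real.log (z s x / m x)) :
    MI ≥ -∑ s, p s * Real.log (∑ r, p r * ∑ x, Real.sqrt (z s x * z r x)) :=
  mutual_information_lower_bound_general C p hp_pos z hz_nonneg hz_sum m hm MI hMI
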